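/- Let n ≥ 1 and let 0 ≤ i ≤ j ≤ n with i + 2j > 2n (equivalently i/2 + j > n). Then there exists a nonzero function f : Σ_3^n → ℝ in U_{[i,j]}(n,3) whose support has cardinality exactly 2^{i+j−n} · 3^{n−j}. -/

import Mathlib

/-- `f` belongs to the eigenspace `U_k(n,q)` of the Hamming graph `H(n,q)`,
i.e. `λ_k(n,q) · f(x) = Σ_{y ∈ N(x)} f(y)` for every vertex `x`, where
`λ_k(n,q) = n(q-1) - q·k` and `N(x)` is the set of vertices at Hamming distance 1 from `x`. -/
def inU (n q k : ℕ) (f : (Fin n → Fin q) → ℝ) : Prop :=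
  ∀ x : Fin n → Fin q,
    ((n : ℝ) * ((q : ℝ) - 1) - (q : ℝ) * (k : ℝ)) * f x =
      ∑ y ∈ Finset.univ.filter (fun y : Fin n → Fin q => hammingDist x y = 1), f y

/-- `f` belongs to the direct sum `U_{[i,j]}(n,q) = U_i(n,q) ⊕ … ⊕ U_j(n,q)`,
i.e. `f = Σ_{k=i}^{j} g_k` with `g_k ∈ U_k(n,q)`. -/
def inUIJ (n q i j : ℕ) (f : (Fin n → Fin q) → ℝ) : Prop :=
  ∃ g : ℕ → (Fin n → Fin q) → ℝ,
    (∀ k ∈ Finset.Icc i j, inU n q k (g k)) ∧ f = ∑ k ∈ Finset.Icc i j, g k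

/-- The cardinality of the support of `f`. -/
noncomputable def suppCard (n q : ℕ) (f : (Fin n → Fin q) → ℝ) : ℕ :=
  (Finset.univ.filter (fun x : Fin n → Fin q => f x ≠ 0)).card

/-!
Eigenfunctions of Hamming graphs multiply: if `g ∈ U_a(m,q)` and `h ∈ U_b(k,q)`, then
`g ⊗ h : (x, y) ↦ g x * h y` lies in `U_{a+b}(m+k,q)`, because the neighbours of `(x, y)` are
those of `x` paired with `y` together with `x` paired with those of `y`, and
`λ_a(m,q) + λ_b(k,q) = λ_{a+b}(m+k,q)`. Hence `U_[i,j] ⊗ U_[i',j'] ⊆ U_[i+i',j+j']`, and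
supports multiply. For `q = 3` three blocks suffice: `(1,-1,0) ∈ U_1(1,3)` with support 2,
the indicator of a point in `U_[0,1](1,3)` with support 1, and a `±1` function on six vertices
of `H(3,3)` in `U_2(3,3)`. Taking `i + 2j - 2n`, `j - i` and `n - j` factors of them gives
the required function.
-/

open Finset Function

theorem hammingDist_eq_one_iff {ι : Type*} [Fintype ι] [DecidableEq ι] {β : ι → Type*}
    [∀ i, DecidableEq (β i)] {x y : ∀ i, β i} :
    hammingDist x y = 1 ↔ ∃ t, x t ≠ y t ∧ update x t (y t) = y := by
  rw [hammingDist, card_eq_one]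
  constructor
  · rintro ⟨t, ht⟩
    have hmem : ∀ i, x i ≠ y i ↔ i = t := fun i => by simpa using congrArg (i ∈ ·) ht
    refine ⟨t, (hmem t).2 rfl, funext fun i => ?_⟩
    by_cases hi : i = t
    · subst hi; simp
    · simpa [hi] using (hmem i).not.2 hi
  · rintro ⟨t, hxy, hy⟩
    refine ⟨t, Finset.ext fun i => ?_⟩
    by_cases hi : i = t
    · simp [hi, hxy]
    · have hyx : y i = x i := by rw [← hy, update_of_ne hi]
      simp [hi, hyx]

theorem sum_hammingDist_eq_one {ι α M : Type*} [Fintype ι] [DecidableEq ι] [Fintype α]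
    [DecidableEq α] [AddCommMonoid M] (f : (ι → α) → M) (x : ι → α) :
    ∑ y ∈ univ.filter (fun y => hammingDist x y = 1), f y =
      ∑ t, ∑ v ∈ univ.filter (· ≠ x t), f (update x t v) := by
  rw [sum_sigma']
  refine (sum_nbij (fun p : (_ : ι) × α => update x p.1 p.2) ?_ ?_ ?_ fun _ _ => rfl).symm
  · rintro ⟨t, v⟩ hv
    simp only [mem_sigma, mem_univ, mem_filter, true_and] at hv
    simpa [hammingDist_eq_one_iff] using ⟨t, by simpa [eq_comm] using hv⟩
  · rintro ⟨t, v⟩ hv ⟨t', v'⟩ _ he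
    simp only [coe_sigma, Set.mem_sigma_iff, mem_coe, mem_univ, mem_filter, true_and] at hv
    by_cases htt : t = t'
    · subst htt; simpa using congrFun he t
    · simpa [htt, hv] using congrFun he t
  · intro y hy
    obtain ⟨t, hxy, hy⟩ := hammingDist_eq_one_iff.1 (by simpa using hy)
    exact ⟨⟨t, y t⟩, by simpa [eq_comm] using hxy, hy⟩

def tensor {α : Type*} {m k : ℕ} (g : (Fin m → α) → ℝ) (h : (Fin k → α) → ℝ) :
    (Fin (m + k) → α) → ℝ :=
  fun x => g (x ∘ Fin.castAdd k) * h (x ∘ Fin.natAdd m)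

theorem Fin.castAdd_ne_natAdd {m k : ℕ} (s : Fin m) (t : Fin k) :
    Fin.castAdd k s ≠ Fin.natAdd m t := by
  rw [ne_eq, Fin.ext_iff, Fin.val_castAdd, Fin.val_natAdd]
  omega

theorem update_castAdd_comp_natAdd {α : Type*} {m k : ℕ} (x : Fin (m + k) → α) (t : Fin m)
    (v : α) : update x (Fin.castAdd k t) v ∘ Fin.natAdd m = x ∘ Fin.natAdd m :=
  update_comp_eq_of_forall_ne _ _ fun s => (Fin.castAdd_ne_natAdd t s).symm

theorem update_natAdd_comp_castAdd {α : Type*} {m k : ℕ} (x : Fin (m + k) → α) (t : Fin k)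
    (v : α) : update x (Fin.natAdd m t) v ∘ Fin.castAdd k = x ∘ Fin.castAdd k :=
  update_comp_eq_of_forall_ne _ _ fun s => Fin.castAdd_ne_natAdd s t

theorem sum_hammingDist_eq_one_tensor {α : Type*} [Fintype α] [DecidableEq α] {m k : ℕ}
    (g : (Fin m → α) → ℝ) (h : (Fin k → α) → ℝ) (x : Fin (m + k) → α) :
    ∑ y ∈ univ.filter (fun y => hammingDist x y = 1), tensor g h y =
      (∑ y ∈ univ.filter (fun y => hammingDist (x ∘ Fin.castAdd k) y = 1), g y) *
          h (x ∘ Fin.natAdd m) +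
        g (x ∘ Fin.castAdd k) *
          ∑ y ∈ univ.filter (fun y => hammingDist (x ∘ Fin.natAdd m) y = 1), h y := by
  simp only [sum_hammingDist_eq_one, Fin.sum_univ_add, tensor, sum_mul, mul_sum,
    update_comp_eq_of_injective _ (Fin.castAdd_injective m k),
    update_comp_eq_of_injective _ (Fin.natAdd_injective k m), update_castAdd_comp_natAdd,
    update_natAdd_comp_castAdd]
  rfl

theorem inU_tensor {q m k a b : ℕ} {g : (Fin m → Fin q) → ℝ} {h : (Fin k → Fin q) → ℝ}
    (hg : inU m q a g) (hh : inU k q b h) : inU (m + k) q (a + b) (tensor g h) := by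
  intro x
  rw [sum_hammingDist_eq_one_tensor, ← hg, ← hh, tensor]
  push_cast
  ring

theorem suppCard_tensor {q m k : ℕ} (g : (Fin m → Fin q) → ℝ) (h : (Fin k → Fin q) → ℝ) :
    suppCard (m + k) q (tensor g h) = suppCard m q g * suppCard k q h := by
  rw [suppCard, suppCard, suppCard, ← card_product]
  exact card_equiv (Fin.appendEquiv m k).symm fun x => by simp [tensor, Function.comp_def]

section Eigenspaces

variable {n q : ℕ}

theorem inU_zero (k : ℕ) : inU n q k 0 := fun x => by simp

theorem inU_add {k : ℕ} {f g : (Fin n → Fin q) → ℝ} (hf : inU n q k f) (hg : inU n q k g) :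
    inU n q k (f + g) := fun x => by
  rw [Pi.add_apply, mul_add, hf x, hg x, ← sum_add_distrib]
  rfl

theorem inU_intCast {k : ℕ} {φ : (Fin n → Fin q) → ℤ}
    (h : ∀ x, ((n : ℤ) * (q - 1) - q * k) * φ x =
      ∑ y ∈ univ.filter (fun y => hammingDist x y = 1), φ y) :
    inU n q k (fun x => (φ x : ℝ)) := fun x => by
  simpa using congrArg (Int.cast : ℤ → ℝ) (h x)

variable {i j : ℕ}

theorem inUIJ_of_inU {k : ℕ} {f : (Fin n → Fin q) → ℝ} (hk : k ∈ Icc i j) (hf : inU n q k f) :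
    inUIJ n q i j f := by
  refine ⟨Pi.single k f, fun l _ => ?_, by rw [sum_pi_single', if_pos hk]⟩
  by_cases hl : l = k
  · subst hl; simpa using hf
  · simpa [hl] using inU_zero l

theorem inUIJ_zero : inUIJ n q i j 0 :=
  ⟨0, fun k _ => inU_zero k, by simp⟩

theorem inUIJ_add {f g : (Fin n → Fin q) → ℝ} (hf : inUIJ n q i j f) (hg : inUIJ n q i j g) :
    inUIJ n q i j (f + g) := by
  obtain ⟨F, hF, rfl⟩ := hf
  obtain ⟨G, hG, rfl⟩ := hg
  exact ⟨F + G, fun k hk => inU_add (hF k hk) (hG k hk), by simp [sum_add_distrib]⟩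

theorem inUIJ_sum {ι : Type*} {s : Finset ι} {f : ι → (Fin n → Fin q) → ℝ}
    (hf : ∀ a ∈ s, inUIJ n q i j (f a)) : inUIJ n q i j (∑ a ∈ s, f a) :=
  sum_induction f _ (fun _ _ => inUIJ_add) inUIJ_zero hf

end Eigenspaces

theorem tensor_sum_sum {α ι κ : Type*} {m k : ℕ} (s : Finset ι) (t : Finset κ)
    (g : ι → (Fin m → α) → ℝ) (h : κ → (Fin k → α) → ℝ) :
    tensor (∑ a ∈ s, g a) (∑ b ∈ t, h b) = ∑ a ∈ s, ∑ b ∈ t, tensor (g a) (h b) := by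
  funext x
  simp [tensor, sum_mul_sum]

theorem inUIJ_tensor {q m k i j i' j' : ℕ} {g : (Fin m → Fin q) → ℝ}
    {h : (Fin k → Fin q) → ℝ} (hg : inUIJ m q i j g) (hh : inUIJ k q i' j' h) :
    inUIJ (m + k) q (i + i') (j + j') (tensor g h) := by
  obtain ⟨G, hG, rfl⟩ := hg
  obtain ⟨H, hH, rfl⟩ := hh
  rw [tensor_sum_sum]
  refine inUIJ_sum fun a ha => inUIJ_sum fun b hb => ?_
  rw [mem_Icc] at ha hb
  exact inUIJ_of_inU (mem_Icc.2 ⟨by omega, by omega⟩)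
    (inU_tensor (hG a (mem_Icc.2 ha)) (hH b (mem_Icc.2 hb)))

theorem suppCard_intCast {n q : ℕ} (φ : (Fin n → Fin q) → ℤ) :
    suppCard n q (fun x => (φ x : ℝ)) = #(univ.filter fun x => φ x ≠ 0) := by
  simp [suppCard]

def HasSupportCard (n q i j c : ℕ) : Prop :=
  ∃ f : (Fin n → Fin q) → ℝ, inUIJ n q i j f ∧ suppCard n q f = c

namespace HasSupportCard

variable {q : ℕ}

theorem tensor {m k i j i' j' c c' : ℕ} (h : HasSupportCard m q i j c)
    (h' : HasSupportCard k q i' j' c') : HasSupportCard (m + k) q (i + i') (j + j') (c * c') := by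
  obtain ⟨f, hf, rfl⟩ := h
  obtain ⟨f', hf', rfl⟩ := h'
  exact ⟨_, inUIJ_tensor hf hf', suppCard_tensor f f'⟩

theorem dim_zero : HasSupportCard 0 q 0 0 1 :=
  ⟨1, inUIJ_of_inU (k := 0) (by simp) fun x => by simp [hammingDist], by simp [suppCard]⟩

theorem pow {m i j c : ℕ} (h : HasSupportCard m q i j c) (r : ℕ) :
    HasSupportCard (r * m) q (r * i) (r * j) (c ^ r) := by
  induction r with
  | zero => simpa using dim_zero
  | succ r ih => simpa only [Nat.succ_mul, pow_succ] using ih.tensor h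

end HasSupportCard

theorem hasSupportCard_one_one_one : HasSupportCard 1 3 1 1 2 := by
  refine ⟨fun x => (![1, -1, 0] (x 0) : ℤ), inUIJ_of_inU (k := 1) (by simp) (inU_intCast ?_), ?_⟩
  · decide
  · rw [suppCard_intCast]; decide

theorem hasSupportCard_one_zero_one : HasSupportCard 1 3 0 1 1 := by
  -- `1 + (2, -1, -1) = 3 δ₀`: a constant, in `U_0`, plus a function of mean zero, in `U_1`.
  refine ⟨fun x => ((1 + ![2, -1, -1] (x 0) : ℤ) : ℝ), ?_, ?_⟩
  · have hsplit : (fun x : Fin 1 → Fin 3 => ((1 + ![2, -1, -1] (x 0) : ℤ) : ℝ)) =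
        (fun _ => ((1 : ℤ) : ℝ)) + fun x => ((![2, -1, -1] (x 0) : ℤ) : ℝ) := by
      funext x; push_cast; rfl
    rw [hsplit]
    exact inUIJ_add (inUIJ_of_inU (k := 0) (by simp) (inU_intCast (by decide)))
      (inUIJ_of_inU (k := 1) (by simp) (inU_intCast (by decide)))
  · rw [suppCard_intCast]; decide

/-- `λ_2(3,3) = 0`: every vertex has as many neighbours with value `1` as with value `-1`. -/
def zeroEigenfunction : (Fin 3 → Fin 3) → ℤ := fun x =>
  ![![![-1, 0, 0], ![0, 1, 0], ![0, 0, 0]],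
    ![![0, 0, 1], ![0, 0, 0], ![0, -1, 0]],
    ![![0, 0, 0], ![0, 0, -1], ![1, 0, 0]]] (x 0) (x 1) (x 2)

theorem hasSupportCard_three_two_two : HasSupportCard 3 3 2 2 6 := by
  refine ⟨fun x => (zeroEigenfunction x : ℝ), inUIJ_of_inU (k := 2) (by simp) (inU_intCast ?_), ?_⟩
  · decide
  · rw [suppCard_intCast]; decide

theorem hasSupportCard_three (a b c : ℕ) :
    HasSupportCard (a + b + 3 * c) 3 (a + 2 * c) (a + b + 2 * c) (2 ^ (a + c) * 3 ^ c) := by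
  have h := ((hasSupportCard_one_one_one.pow a).tensor
    (hasSupportCard_one_zero_one.pow b)).tensor (hasSupportCard_three_two_two.pow c)
  convert h using 1
  · ring
  · ring
  · ring
  · rw [show 6 = 2 * 3 from rfl, mul_pow]; ring

theorem stmt8_general (n i j : ℕ) (hij : i ≤ j) (hjn : j ≤ n) (hsum : 2 * n < i + 2 * j) :
    ∃ f : (Fin n → Fin 3) → ℝ, inUIJ n 3 i j f ∧ f ≠ 0 ∧
      suppCard n 3 f = 2 ^ (i + j - n) * 3 ^ (n - j) := by
  have h := hasSupportCard_three (i + 2 * j - 2 * n) (j - i) (n - j)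
  rw [show i + 2 * j - 2 * n + (j - i) + 3 * (n - j) = n by omega,
    show i + 2 * j - 2 * n + 2 * (n - j) = i by omega,
    show i + 2 * j - 2 * n + (j - i) + 2 * (n - j) = j by omega,
    show i + 2 * j - 2 * n + (n - j) = i + j - n by omega] at h
  obtain ⟨f, hf, hcard⟩ := h
  refine ⟨f, hf, ?_, hcard⟩
  rintro rfl
  simp [suppCard] at hcard

/-- If `0 ≤ i ≤ j ≤ n` and `i + 2j > 2n`, then there is a nonzero function in
`U_{[i,j]}(n,3)` whose support has cardinality exactly `2^{i+j-n} · 3^{n-j}`. -/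
theorem stmt8 (n i j : ℕ) (hn : 1 ≤ n) (hij : i ≤ j) (hjn : j ≤ n) (hsum : 2 * n < i + 2 * j) :
    ∃ f : (Fin n → Fin 3) → ℝ, inUIJ n 3 i j f ∧ f ≠ 0 ∧
      suppCard n 3 f = 2 ^ (i + j - n) * 3 ^ (n - j) :=
  stmt8_general n i j hij hjn hsum
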